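/- The decomposition coproduct Γ is an algebra morphism for the quasi-shuffle product: Γ(w' ⧢ w'') = Γ(w') ⧢ Γ(w'') for all words w', w'', where the product on the tensor square is componentwise quasi-shuffle. -/

import Mathlib

/-!
Write `Δ` for deconcatenation and `Δ⁺ = Δ - 1 ⊗ id` for its part with nonempty left factor.
Splitting off the first block of a decomposition gives `Γ(w) = Σ_{b ⊗ r ∈ Δ⁺ w} μ_b(Γ r)` for
`w ≠ []`, where `μ_b(x ⊗ y) = ‖b‖x ⊗ (b ⧢ y)`. Since `Δ` is a ⧢-morphism,
`Δ⁺(w ⧢ w') = (1 ⊗ w) Δ⁺w' + Δ⁺w (1 ⊗ w') + Δ⁺w Δ⁺w'`, and the quasi-shuffle recursion on first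
letters gives the Leibniz-type rule
`μ_b X · μ_b' Y = μ_b(X · μ_b' Y) + μ_b'(μ_b X · Y) + Σ_{u ∈ b ⧢ b'} μ_u(X · Y)`,
because `‖u‖ = ‖b‖ + ‖b'‖` for every `u` in the support of `b ⧢ b'`. Expanding `Γ(w ⧢ w')` with
the first two facts and `Γ(w) · Γ(w')` with the third gives the same expression in terms of
pairs of shorter words, so induction on `|w| + |w'|` concludes.
-/

/-- The quasi-shuffle product of two words over a commutative semigroup `Ω`. -/
noncomputable def qsh {Ω : Type*} [AddCommSemigroup Ω] :
    List Ω → List Ω → (List Ω →₀ ℤ)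
  | [], w => Finsupp.single w 1
  | a :: w', [] => Finsupp.single (a :: w') 1
  | a :: w', b :: w'' =>
      Finsupp.mapDomain (a :: ·) (qsh w' (b :: w''))
    + Finsupp.mapDomain (b :: ·) (qsh (a :: w') w'')
    + Finsupp.mapDomain ((a + b) :: ·) (qsh w' w'')
  termination_by w₁ w₂ => w₁.length + w₂.length

/-- Weight of a word (junk default value for the empty word). -/
def wt {Ω : Type*} [AddCommSemigroup Ω] [Inhabited Ω] : List Ω → Ω
  | [] => default
  | a :: l => l.foldl (· + ·) a

/-- Iterated quasi-shuffle `w¹ ⧢ ⋯ ⧢ wˢ` of a list of words. -/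
noncomputable def qshFold {Ω : Type*} [AddCommSemigroup Ω] :
    List (List Ω) → (List Ω →₀ ℤ)
  | [] => Finsupp.single [] 1
  | u :: rest => (qshFold rest).sum fun v c => c • qsh u v

/-- The decomposition coproduct
`Γ(w) = ∑_{s≥1} ∑_{w = w¹.⋯.wˢ} ‖w¹‖⋯‖wˢ‖ ⊗ (w¹ ⧢ ⋯ ⧢ wˢ)`, the sum running
over decompositions of `w` into nonempty words; the tensor square of the free
module on words is modelled as the free module on pairs of words. -/
noncomputable def Gam {Ω : Type*} [AddCommSemigroup Ω] [Inhabited Ω]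
    (w : List Ω) : (List Ω × List Ω) →₀ ℤ :=
  ∑ c : Composition w.length,
    Finsupp.mapDomain (fun v => ((w.splitWrtComposition c).map wt, v))
      (qshFold (w.splitWrtComposition c))

/-- The tensor product `x ⊗ y` of two elements of the free module on words,
as an element of the free module on pairs of words. -/
noncomputable def tens {Ω : Type*} (x y : List Ω →₀ ℤ) : (List Ω × List Ω) →₀ ℤ :=
  x.sum fun a ca => y.sum fun b cb => Finsupp.single (a, b) (ca * cb)

open Finsupp

section Words

variable {Ω : Type*}

noncomputable def consL (a : Ω) : (List Ω →₀ ℤ) →ₗ[ℤ] List Ω →₀ ℤ :=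
  lmapDomain ℤ ℤ (a :: ·)

@[simp]
theorem consL_single (a : Ω) (u : List Ω) : consL a (single u 1) = single (a :: u) 1 :=
  mapDomain_single

theorem consL_mem_supported {a : Ω} {s : Set (List Ω)} {x : List Ω →₀ ℤ}
    (hx : x ∈ supported ℤ ℤ ((a :: ·) ⁻¹' s)) : consL a x ∈ supported ℤ ℤ s :=
  supported_comap_lmapDomain ℤ ℤ _ s hx

variable [AddCommSemigroup Ω]

noncomputable def qmul : (List Ω →₀ ℤ) →ₗ[ℤ] (List Ω →₀ ℤ) →ₗ[ℤ] List Ω →₀ ℤ :=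
  linearCombination ℤ fun u => linearCombination ℤ (qsh u)

@[simp]
theorem qmul_single_single (u v : List Ω) : qmul (single u 1) (single v 1) = qsh u v := by
  simp [qmul]

@[simp]
theorem qsh_nil_left (w : List Ω) : qsh [] w = single w 1 := by
  cases w <;> rw [qsh]

@[simp]
theorem qsh_nil_right (w : List Ω) : qsh w [] = single w 1 := by
  cases w <;> rw [qsh]

theorem qsh_cons_cons (a b : Ω) (u v : List Ω) :
    qsh (a :: u) (b :: v) =
      consL a (qsh u (b :: v)) + consL b (qsh (a :: u) v) + consL (a + b) (qsh u v) := by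
  rw [qsh]; rfl

theorem qsh_comm : ∀ u v : List Ω, qsh u v = qsh v u
  | [], v => by simp
  | a :: u, [] => by simp
  | a :: u, b :: v => by
      rw [qsh_cons_cons, qsh_cons_cons, qsh_comm u, qsh_comm (a :: u), qsh_comm u v, add_comm b]
      abel
  termination_by u v => u.length + v.length

theorem qsh_cons_cons_apply_nil (a b : Ω) (u v : List Ω) : qsh (a :: u) (b :: v) [] = 0 := by
  simp [qsh_cons_cons, consL, mapDomain_of_notMem_range]

theorem qmul_comm (x y : List Ω →₀ ℤ) : qmul x y = qmul y x := by
  suffices h : qmul.flip = (qmul : (List Ω →₀ ℤ) →ₗ[ℤ] _ →ₗ[ℤ] List Ω →₀ ℤ) from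
    congr($h y x)
  ext u v
  simp [qsh_comm]

theorem qmul_nil_left (x : List Ω →₀ ℤ) : qmul (single [] 1) x = x := by
  suffices h : qmul (single [] 1) = (LinearMap.id : (List Ω →₀ ℤ) →ₗ[ℤ] _) from congr($h x)
  ext u
  simp

theorem qmul_nil_right (x : List Ω →₀ ℤ) : qmul x (single [] 1) = x := by
  rw [qmul_comm, qmul_nil_left]

theorem qmul_consL_consL (a b : Ω) (x y : List Ω →₀ ℤ) :
    qmul (consL a x) (consL b y) =
      consL a (qmul x (consL b y)) + consL b (qmul (consL a x) y) + consL (a + b) (qmul x y) := by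
  suffices h : qmul.compl₁₂ (consL a) (consL b) =
      (qmul.compl₂ (consL b)).compr₂ (consL a) + (qmul ∘ₗ consL a).compr₂ (consL b) +
        qmul.compr₂ (consL (a + b)) by
    simpa using congr($h x y)
  ext u v
  simp [qsh_cons_cons]

theorem qsh_assoc : ∀ u v w : List Ω,
    qmul (qsh u v) (single w 1) = qmul (single u 1) (qsh v w)
  | [], v, w => by simp [qmul_nil_left]
  | a :: u, [], w => by simp
  | a :: u, b :: v, [] => by simp [qmul_nil_right]
  | a :: u, b :: v, c :: w => by
      have ih1 := qsh_assoc u (b :: v) (c :: w)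
      have ih2 := qsh_assoc u (b :: v) w
      have ih3 := qsh_assoc (a :: u) v (c :: w)
      have ih4 := qsh_assoc (a :: u) v w
      have ih5 := qsh_assoc u v (c :: w)
      have ih6 := qsh_assoc u v w
      have ih7 := qsh_assoc (a :: u) (b :: v) w
      rw [← consL_single c w, ← consL_single a u] at *
      rw [qsh_cons_cons a b, qsh_cons_cons b c]
      -- The terms led by `c` on the left and by `a` on the right recombine into `ih7` and `ih1`.
      rw [qsh_cons_cons a b] at ih7
      rw [qsh_cons_cons b c] at ih1
      simp only [map_add, LinearMap.add_apply, qmul_consL_consL] at ih1 ih7 ⊢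
      rw [ih1, ih2, ih3, ih4, ih5, ih6, ← ih7, add_assoc a b c]
      simp only [map_add]
      abel
  termination_by u v w => u.length + v.length + w.length

theorem qmul_assoc (x y z : List Ω →₀ ℤ) : qmul (qmul x y) z = qmul x (qmul y z) := by
  suffices h : qmul.compr₂ (qmul.flip z) = qmul.compl₂ (qmul.flip z) by
    simpa using congr($h x y)
  ext u v : 4
  suffices h : qmul (qsh u v) = qmul (single u 1) ∘ₗ qmul (single v 1) by
    simpa using congr($h z)
  ext w : 2
  simpa using qsh_assoc u v w

theorem qshFold_cons (b : List Ω) (L : List (List Ω)) :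
    qshFold (b :: L) = qmul (single b 1) (qshFold L) := by
  simp [qshFold, qmul, linearCombination_apply]

end Words

section Weight
variable {Ω : Type*} [AddCommSemigroup Ω]

/-- Unlike `wt`, this weight is additive under concatenation and needs no junk value at `[]`. -/
def wt₀ (l : List Ω) : WithZero Ω := (l.map (↑)).sum

@[simp] theorem wt₀_nil : wt₀ ([] : List Ω) = 0 := rfl

@[simp] theorem wt₀_cons (a : Ω) (l : List Ω) : wt₀ (a :: l) = a + wt₀ l := rfl

theorem coe_foldl_add (l : List Ω) (a : Ω) :
    ((l.foldl (· + ·) a : Ω) : WithZero Ω) = a + wt₀ l := by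
  induction l generalizing a with
  | nil => simp
  | cons b l ih => simp [ih, add_assoc]

theorem coe_wt [Inhabited Ω] : ∀ {l : List Ω}, l ≠ [] → ((wt l : Ω) : WithZero Ω) = wt₀ l
  | a :: l, _ => coe_foldl_add l a

theorem qsh_mem_supported : ∀ u v : List Ω,
    qsh u v ∈ supported ℤ ℤ {z | wt₀ z = wt₀ u + wt₀ v}
  | [], v => by simpa using single_mem_supported ℤ 1 (by simp)
  | a :: u, [] => by simpa using single_mem_supported ℤ 1 (by simp)
  | a :: u, b :: v => by
      rw [qsh_cons_cons]
      refine add_mem (add_mem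
        (consL_mem_supported (supported_mono ?_ (qsh_mem_supported u (b :: v))))
        (consL_mem_supported (supported_mono ?_ (qsh_mem_supported (a :: u) v))))
        (consL_mem_supported (supported_mono ?_ (qsh_mem_supported u v))) <;>
      intro z hz <;> simp_all [add_assoc, add_left_comm]
  termination_by u v => u.length + v.length

theorem wt_of_mem_support_qsh [Inhabited Ω] {u v z : List Ω} (hu : u ≠ []) (hv : v ≠ [])
    (hz : z ∈ (qsh u v).support) : wt z = wt u + wt v := by
  have h : wt₀ z = ↑(wt u + wt v) := by
    rw [WithZero.coe_add, coe_wt hu, coe_wt hv]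
    exact (mem_supported ℤ _).1 (qsh_mem_supported u v) hz
  have hz' : z ≠ [] := by
    rintro rfl
    exact WithZero.coe_ne_zero h.symm
  rwa [← coe_wt hz', WithZero.coe_inj] at h

end Weight

section TensorSquare
variable {Ω : Type*}

noncomputable def tensL :
    (List Ω →₀ ℤ) →ₗ[ℤ] (List Ω →₀ ℤ) →ₗ[ℤ] (List Ω × List Ω) →₀ ℤ :=
  linearCombination ℤ fun u => linearCombination ℤ fun v => single (u, v) 1

@[simp]
theorem tensL_single_single (u v : List Ω) : tensL (single u 1) (single v 1) = single (u, v) 1 := by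
  simp [tensL]

theorem tens_eq_tensL (x y : List Ω →₀ ℤ) : tens x y = tensL x y := by
  simp only [tens, tensL, linearCombination_apply, LinearMap.finsupp_sum_apply,
    LinearMap.smul_apply, Finsupp.smul_sum, smul_single, smul_eq_mul, mul_one]

noncomputable def consFst (a : Ω) : ((List Ω × List Ω) →₀ ℤ) →ₗ[ℤ] (List Ω × List Ω) →₀ ℤ :=
  lmapDomain ℤ ℤ fun p => (a :: p.1, p.2)

theorem consFst_tensL (a : Ω) (x y : List Ω →₀ ℤ) :
    consFst a (tensL x y) = tensL (consL a x) y := by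
  suffices h : tensL.compr₂ (consFst a) = tensL ∘ₗ consL a by simpa using congr($h x y)
  ext u v : 4
  simp [consFst]

theorem mapDomain_pair_eq_tensL (P : List Ω) (z : List Ω →₀ ℤ) :
    mapDomain (fun v => (P, v)) z = tensL (single P 1) z := by
  suffices h : lmapDomain ℤ ℤ (fun v => (P, v)) = tensL (single P 1) by simp [← h]
  ext v : 2
  simp

theorem ext_tensL {N : Type*} [AddCommMonoid N] [Module ℤ N]
    {φ ψ : ((List Ω × List Ω) →₀ ℤ) →ₗ[ℤ] N} (h : ∀ x y, φ (tensL x y) = ψ (tensL x y)) :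
    φ = ψ := by
  ext ⟨u, v⟩ : 2
  simpa using h (single u 1) (single v 1)

theorem ext_tensL₂ {N : Type*} [AddCommMonoid N] [Module ℤ N]
    {B B' : ((List Ω × List Ω) →₀ ℤ) →ₗ[ℤ] ((List Ω × List Ω) →₀ ℤ) →ₗ[ℤ] N}
    (h : ∀ x y x' y', B (tensL x y) (tensL x' y') = B' (tensL x y) (tensL x' y')) : B = B' :=
  ext_tensL fun x y => ext_tensL fun x' y' => h x y x' y'

variable [AddCommSemigroup Ω]

noncomputable def qmulT :
    ((List Ω × List Ω) →₀ ℤ) →ₗ[ℤ] ((List Ω × List Ω) →₀ ℤ) →ₗ[ℤ] (List Ω × List Ω) →₀ ℤ :=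
  linearCombination ℤ fun p => linearCombination ℤ fun r => tensL (qsh p.1 r.1) (qsh p.2 r.2)

theorem qmulT_apply (X Y : (List Ω × List Ω) →₀ ℤ) :
    qmulT X Y =
      X.sum fun p cp => Y.sum fun r cr => (cp * cr) • tens (qsh p.1 r.1) (qsh p.2 r.2) := by
  simp only [qmulT, linearCombination_apply, LinearMap.finsupp_sum_apply, LinearMap.smul_apply,
    Finsupp.smul_sum, smul_smul, tens_eq_tensL]

theorem qmulT_tensL_tensL (x y x' y' : List Ω →₀ ℤ) :
    qmulT (tensL x y) (tensL x' y') = tensL (qmul x x') (qmul y y') := by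
  suffices h : tensL.compr₂ (qmulT.flip (tensL x' y')) =
      tensL.compl₁₂ (qmul.flip x') (qmul.flip y') by
    simpa using congr($h x y)
  ext u v : 4
  suffices h : tensL.compr₂ (qmulT (single (u, v) 1)) =
      tensL.compl₁₂ (qmul (single u 1)) (qmul (single v 1)) by
    simpa using congr($h x' y')
  ext u' v' : 4
  simp [qmulT]

theorem qmulT_comm (X Y : (List Ω × List Ω) →₀ ℤ) : qmulT X Y = qmulT Y X := by
  suffices h : qmulT.flip = (qmulT : ((List Ω × List Ω) →₀ ℤ) →ₗ[ℤ] _ →ₗ[ℤ] _) from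
    congr($h Y X)
  refine ext_tensL₂ fun x y x' y' => ?_
  simp [qmulT_tensL_tensL, qmul_comm x, qmul_comm y]

theorem qmulT_assoc (X Y Z : (List Ω × List Ω) →₀ ℤ) :
    qmulT (qmulT X Y) Z = qmulT X (qmulT Y Z) := by
  suffices h : qmulT.compr₂ (qmulT.flip Z) = qmulT.compl₂ (qmulT.flip Z) by
    simpa using congr($h X Y)
  refine ext_tensL₂ fun x y x' y' => ?_
  suffices h : qmulT (tensL (qmul x x') (qmul y y')) = qmulT (tensL x y) ∘ₗ qmulT (tensL x' y') by
    simpa [qmulT_tensL_tensL] using congr($h Z)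
  refine ext_tensL fun x'' y'' => ?_
  simp [qmulT_tensL_tensL, qmul_assoc]

theorem qmulT_left_comm (X Y Z : (List Ω × List Ω) →₀ ℤ) :
    qmulT X (qmulT Y Z) = qmulT Y (qmulT X Z) := by
  rw [← qmulT_assoc, qmulT_comm X, qmulT_assoc]

theorem qmulT_mul_mul_comm (X Y Z W : (List Ω × List Ω) →₀ ℤ) :
    qmulT (qmulT X Y) (qmulT Z W) = qmulT (qmulT X Z) (qmulT Y W) := by
  rw [qmulT_assoc, qmulT_left_comm Y, ← qmulT_assoc]

theorem qmulT_nil_nil (X : (List Ω × List Ω) →₀ ℤ) :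
    qmulT (single ([], []) 1) X = X := by
  suffices h : qmulT (single ([], []) 1) = (LinearMap.id : ((List Ω × List Ω) →₀ ℤ) →ₗ[ℤ] _) from
    congr($h X)
  refine ext_tensL fun x y => ?_
  simp [← tensL_single_single, qmulT_tensL_tensL, qmul_nil_left]

theorem qmulT_consFst_consFst (a b : Ω) (X Y : (List Ω × List Ω) →₀ ℤ) :
    qmulT (consFst a X) (consFst b Y) =
      consFst a (qmulT X (consFst b Y)) + consFst b (qmulT (consFst a X) Y) +
        consFst (a + b) (qmulT X Y) := by
  suffices h : qmulT.compl₁₂ (consFst a) (consFst b) =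
      (qmulT.compl₂ (consFst b)).compr₂ (consFst a) + (qmulT ∘ₗ consFst a).compr₂ (consFst b) +
        qmulT.compr₂ (consFst (a + b)) by
    simpa using congr($h X Y)
  refine ext_tensL₂ fun x y x' y' => ?_
  simp [consFst_tensL, qmulT_tensL_tensL, qmul_consL_consL]

theorem qmulT_consFst_tensL_nil (a : Ω) (X : (List Ω × List Ω) →₀ ℤ) (y : List Ω →₀ ℤ) :
    qmulT (consFst a X) (tensL (single [] 1) y) = consFst a (qmulT X (tensL (single [] 1) y)) := by
  suffices h : (qmulT.flip (tensL (single [] 1) y)) ∘ₗ consFst a =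
      consFst a ∘ₗ qmulT.flip (tensL (single [] 1) y) by
    simpa using congr($h X)
  refine ext_tensL fun x x' => ?_
  simp [consFst_tensL, qmulT_tensL_tensL, qmul_nil_right]

theorem qmulT_tensL_nil_consFst (a : Ω) (y : List Ω →₀ ℤ) (X : (List Ω × List Ω) →₀ ℤ) :
    qmulT (tensL (single [] 1) y) (consFst a X) = consFst a (qmulT (tensL (single [] 1) y) X) := by
  rw [qmulT_comm, qmulT_consFst_tensL_nil, qmulT_comm]

end TensorSquare

section Deconcatenation
variable {Ω : Type*}

noncomputable def dec (w : List Ω) : (List Ω × List Ω) →₀ ℤ :=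
  ∑ i ∈ Finset.range (w.length + 1), single (w.take i, w.drop i) 1

theorem dec_nil : dec ([] : List Ω) = single ([], []) 1 := by
  simp [dec]

theorem dec_cons (a : Ω) (s : List Ω) :
    dec (a :: s) = tensL (single [] 1) (single (a :: s) 1) + consFst a (dec s) := by
  rw [dec, List.length_cons, Finset.sum_range_succ', add_comm]
  simp [dec, map_sum, consFst]

noncomputable def decL : (List Ω →₀ ℤ) →ₗ[ℤ] (List Ω × List Ω) →₀ ℤ :=
  linearCombination ℤ dec

theorem decL_consL (a : Ω) (x : List Ω →₀ ℤ) :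
    decL (consL a x) = tensL (single [] 1) (consL a x) + consFst a (decL x) := by
  suffices h : decL ∘ₗ consL a = tensL (single [] 1) ∘ₗ consL a + consFst a ∘ₗ decL by
    simpa using congr($h x)
  ext u : 2
  simp [decL, dec_cons]

noncomputable def decPos : (List Ω →₀ ℤ) →ₗ[ℤ] (List Ω × List Ω) →₀ ℤ :=
  decL - tensL (single [] 1)

theorem decPos_single_nil : decPos (single ([] : List Ω) 1) = 0 := by
  simp [decPos, decL, dec_nil]

theorem decPos_single_cons (a : Ω) (t : List Ω) :
    decPos (single (a :: t) 1) =
      ∑ i ∈ Finset.range (t.length + 1),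
        tensL (single (a :: t.take i) 1) (single (t.drop i) 1) := by
  rw [decPos, LinearMap.sub_apply, decL, linearCombination_single, one_smul, dec_cons]
  simp [dec, map_sum, consFst]

variable [AddCommSemigroup Ω]

theorem decL_qsh : ∀ u v : List Ω, decL (qsh u v) = qmulT (dec u) (dec v)
  | [], v => by simp [decL, dec_nil, qmulT_nil_nil]
  | a :: t, [] => by simp [decL, dec_nil, qmulT_comm _ (single ([], []) 1), qmulT_nil_nil]
  | a :: t, b :: t' => by
      rw [qsh_cons_cons]
      simp only [map_add, decL_consL]
      rw [decL_qsh t (b :: t'), decL_qsh (a :: t) t', decL_qsh t t']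
      simp only [dec_cons, map_add, LinearMap.add_apply, qmulT_consFst_consFst,
        qmulT_consFst_tensL_nil, qmulT_tensL_nil_consFst, qmulT_tensL_tensL, qsh_nil_left,
        qmul_single_single, qsh_cons_cons]
      abel
  termination_by u v => u.length + v.length

theorem decPos_qsh (u v : List Ω) :
    decPos (qsh u v) =
      qmulT (tensL (single [] 1) (single u 1)) (decPos (single v 1)) +
        qmulT (decPos (single u 1)) (tensL (single [] 1) (single v 1)) +
        qmulT (decPos (single u 1)) (decPos (single v 1)) := by
  simp only [decPos, LinearMap.sub_apply, map_sub, decL_qsh,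
    qmulT_tensL_tensL, qmul_single_single, qsh_nil_left]
  simp [decL]

end Deconcatenation

def Composition.consEquiv (n : ℕ) :
    (Σ i : Fin (n + 1), Composition (n - i)) ≃ Composition (n + 1) where
  toFun x := ⟨(x.1 + 1) :: x.2.blocks, by
      intro k hk
      rcases List.mem_cons.1 hk with rfl | hk
      · omega
      · exact x.2.blocks_pos hk, by
      have := x.1.2
      rw [List.sum_cons, x.2.blocks_sum]
      omega⟩
  invFun
    | ⟨k :: l, hpos, hsum⟩ => ⟨⟨k - 1, by simp at hsum; omega⟩,
        ⟨l, fun hj => hpos (List.mem_cons_of_mem k hj), by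
          have := hpos List.mem_cons_self
          simp only [List.sum_cons] at hsum
          show l.sum = n - (k - 1)
          omega⟩⟩
    | ⟨[], _, hsum⟩ => absurd hsum (by simp)
  left_inv _ := rfl
  right_inv
    | ⟨k :: l, hpos, _⟩ => by
        have := hpos List.mem_cons_self
        ext1
        simp only [List.cons.injEq, and_true]
        omega
    | ⟨[], _, hsum⟩ => absurd hsum (by simp)

theorem List.splitWrtComposition_consEquiv {α : Type*} (l : List α) {n : ℕ} (i : Fin (n + 1))
    (c : Composition (n - i)) :
    l.splitWrtComposition (Composition.consEquiv n ⟨i, c⟩) =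
      l.take (i + 1) :: (l.drop (i + 1)).splitWrtComposition c :=
  List.splitWrtCompositionAux_cons _ _ _

section Coproduct
variable {Ω : Type*} [AddCommSemigroup Ω] [Inhabited Ω]

noncomputable def blockMul (b : List Ω) :
    ((List Ω × List Ω) →₀ ℤ) →ₗ[ℤ] (List Ω × List Ω) →₀ ℤ :=
  consFst (wt b) ∘ₗ qmulT (tensL (single [] 1) (single b 1))

theorem blockMul_tensL (b : List Ω) (x y : List Ω →₀ ℤ) :
    blockMul b (tensL x y) = tensL (consL (wt b) x) (qmul (single b 1) y) := by
  rw [blockMul, LinearMap.comp_apply, qmulT_tensL_tensL, qmul_nil_left, consFst_tensL]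

noncomputable def gamL : (List Ω →₀ ℤ) →ₗ[ℤ] (List Ω × List Ω) →₀ ℤ :=
  linearCombination ℤ Gam

noncomputable def splitGam : ((List Ω × List Ω) →₀ ℤ) →ₗ[ℤ] (List Ω × List Ω) →₀ ℤ :=
  linearCombination ℤ fun p => blockMul p.1 (Gam p.2)

theorem splitGam_tensL (x z : List Ω →₀ ℤ) :
    splitGam (tensL x z) = linearCombination ℤ (fun u => blockMul u (gamL z)) x := by
  suffices h : tensL.compr₂ splitGam = linearCombination ℤ fun u => blockMul u ∘ₗ gamL by
    simpa [linearCombination_apply, LinearMap.finsupp_sum_apply] using congr($h x z)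
  ext u v : 4
  simp [splitGam, gamL]

theorem Gam_eq_sum (l : List Ω) {n : ℕ} (h : l.length = n) :
    Gam l = ∑ c : Composition n, mapDomain (fun v => ((l.splitWrtComposition c).map wt, v))
      (qshFold (l.splitWrtComposition c)) := by
  subst h; rfl

theorem Gam_nil : Gam ([] : List Ω) = single ([], []) 1 := by
  have h : ∀ c : Composition 0, c.blocks = [] := fun c =>
    List.eq_nil_of_length_eq_zero (by simp)
  simp [Gam, List.splitWrtComposition, List.splitWrtCompositionAux, h, qshFold, composition_card]

theorem Gam_cons (a : Ω) (t : List Ω) :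
    Gam (a :: t) =
      ∑ i ∈ Finset.range (t.length + 1), blockMul (a :: t.take i) (Gam (t.drop i)) := by
  rw [← Fin.sum_univ_eq_sum_range]
  simp_rw [Gam_eq_sum (t.drop _) (List.length_drop ..), map_sum]
  rw [Gam_eq_sum (a :: t) (List.length_cons ..), ← (Composition.consEquiv t.length).sum_comp,
    Fintype.sum_sigma]
  refine Finset.sum_congr rfl fun i _ => Finset.sum_congr rfl fun c _ => ?_
  rw [List.splitWrtComposition_consEquiv]
  simp [qshFold_cons, mapDomain_pair_eq_tensL, blockMul_tensL]

theorem Gam_cons_eq_splitGam (a : Ω) (t : List Ω) :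
    Gam (a :: t) = splitGam (decPos (single (a :: t) 1)) := by
  simp [Gam_cons a t, decPos_single_cons, map_sum, splitGam]

theorem gamL_eq_splitGam_decPos (x : List Ω →₀ ℤ) :
    gamL x = splitGam (decPos x) + x [] • single ([], []) 1 := by
  suffices h : gamL = splitGam ∘ₗ decPos + (lapply []).smulRight (single ([], []) 1) by
    simpa using congr($h x)
  ext (_ | ⟨a, t⟩) : 2
  · simp [gamL, Gam_nil, decPos_single_nil]
  · simp [gamL, Gam_cons_eq_splitGam]

theorem linearCombination_blockMul_qsh {b b' : List Ω} (hb : b ≠ []) (hb' : b' ≠ [])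
    (Z : (List Ω × List Ω) →₀ ℤ) :
    linearCombination ℤ (fun u => blockMul u Z) (qsh b b') =
      consFst (wt b + wt b') (qmulT (tensL (single [] 1) (qsh b b')) Z) := by
  conv_rhs => rw [← (qsh b b').sum_single]
  simp only [map_finsuppSum, LinearMap.finsupp_sum_apply, linearCombination_apply]
  refine Finsupp.sum_congr fun u hu => ?_
  rw [← smul_single_one u, map_smul, map_smul, LinearMap.smul_apply, map_smul, blockMul,
    LinearMap.comp_apply, wt_of_mem_support_qsh hb hb' hu]

/-- The first letters `wt b`, `wt b'` of the left factors quasi-shuffle as in `qsh_cons_cons`,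
while the right factors are simply multiplied. -/
theorem qmulT_blockMul_blockMul {b b' : List Ω} (hb : b ≠ []) (hb' : b' ≠ [])
    (X Y : (List Ω × List Ω) →₀ ℤ) :
    qmulT (blockMul b X) (blockMul b' Y) =
      blockMul b (qmulT X (blockMul b' Y)) + blockMul b' (qmulT (blockMul b X) Y) +
        linearCombination ℤ (fun u => blockMul u (qmulT X Y)) (qsh b b') := by
  rw [linearCombination_blockMul_qsh hb hb']
  simp only [blockMul, LinearMap.comp_apply]
  rw [qmulT_consFst_consFst, qmulT_assoc, qmulT_left_comm _ (tensL _ (single b' 1)),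
    qmulT_mul_mul_comm, qmulT_tensL_tensL, qmul_single_single, qmul_single_single, qsh_nil_left]

/-- The expansion shared by `Γ(a :: t ⧢ b :: t')` and `Γ(a :: t) ⧢ Γ(b :: t')`, written in
terms of the values `F u v` on pairs of shorter words. -/
noncomputable def gamRec (F : List Ω → List Ω → (List Ω × List Ω) →₀ ℤ) (a : Ω) (t : List Ω)
    (b : Ω) (t' : List Ω) : (List Ω × List Ω) →₀ ℤ :=
  ∑ j ∈ Finset.range (t'.length + 1), blockMul (b :: t'.take j) (F (a :: t) (t'.drop j)) +
    ∑ i ∈ Finset.range (t.length + 1), blockMul (a :: t.take i) (F (t.drop i) (b :: t')) +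
    ∑ i ∈ Finset.range (t.length + 1), ∑ j ∈ Finset.range (t'.length + 1),
      linearCombination ℤ (fun u => blockMul u (F (t.drop i) (t'.drop j)))
        (qsh (a :: t.take i) (b :: t'.take j))

theorem gamRec_congr {F G : List Ω → List Ω → (List Ω × List Ω) →₀ ℤ} {a b : Ω} {t t' : List Ω}
    (h : ∀ u v, u.length + v.length < (a :: t).length + (b :: t').length → F u v = G u v) :
    gamRec F a t b t' = gamRec G a t b t' := by
  have h₁ (j : ℕ) : F (a :: t) (t'.drop j) = G (a :: t) (t'.drop j) :=
    h _ _ (by simp only [List.length_drop, List.length_cons]; omega)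
  have h₂ (i : ℕ) : F (t.drop i) (b :: t') = G (t.drop i) (b :: t') :=
    h _ _ (by simp only [List.length_drop, List.length_cons]; omega)
  have h₃ (i j : ℕ) : F (t.drop i) (t'.drop j) = G (t.drop i) (t'.drop j) :=
    h _ _ (by simp only [List.length_drop, List.length_cons]; omega)
  simp only [gamRec, h₁, h₂, h₃]

theorem gamL_qsh_cons_cons (a b : Ω) (t t' : List Ω) :
    gamL (qsh (a :: t) (b :: t')) = gamRec (fun u v => gamL (qsh u v)) a t b t' := by
  unfold gamRec
  rw [gamL_eq_splitGam_decPos, qsh_cons_cons_apply_nil, zero_smul, add_zero, decPos_qsh,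
    decPos_single_cons, decPos_single_cons]
  simp only [map_add, map_sum, LinearMap.sum_apply, qmulT_tensL_tensL, qmul_single_single,
    qsh_nil_left, qsh_nil_right, splitGam_tensL, linearCombination_single, one_smul]
  rw [Finset.sum_comm (s := Finset.range (t'.length + 1))]

theorem qmulT_Gam_cons_cons (a b : Ω) (t t' : List Ω) :
    qmulT (Gam (a :: t)) (Gam (b :: t')) = gamRec (fun u v => qmulT (Gam u) (Gam v)) a t b t' := by
  simp only [gamRec]
  rw [Gam_cons a t, Gam_cons b t']
  simp only [map_sum, LinearMap.sum_apply, qmulT_blockMul_blockMul, ne_eq, reduceCtorEq,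
    not_false_eq_true, Finset.sum_add_distrib]
  rw [Finset.sum_comm (s := Finset.range (t.length + 1)),
    Finset.sum_comm (s := Finset.range (t.length + 1)) (t := Finset.range (t'.length + 1))]
  abel

theorem gamL_qsh : ∀ w w' : List Ω, gamL (qsh w w') = qmulT (Gam w) (Gam w')
  | [], w' => by simp [gamL, Gam_nil, qmulT_nil_nil]
  | a :: t, [] => by simp [gamL, Gam_nil, qmulT_comm _ (single ([], []) 1), qmulT_nil_nil]
  | a :: t, b :: t' => by
      rw [gamL_qsh_cons_cons, qmulT_Gam_cons_cons]
      exact gamRec_congr fun u v _ => gamL_qsh u v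
  termination_by w w' => w.length + w'.length

end Coproduct

/-- `Γ` is an algebra morphism for the quasi-shuffle product:
`Γ(w' ⧢ w'') = Γ(w') ⧢ Γ(w'')`, the product on the tensor square being the
componentwise quasi-shuffle. -/
theorem Gam_qsh_morphism {Ω : Type*} [AddCommSemigroup Ω] [Inhabited Ω]
    (w w' : List Ω) :
    (qsh w w').sum (fun u c => c • Gam u) =
      (Gam w).sum (fun p cp => (Gam w').sum fun r cr =>
        (cp * cr) • tens (qsh p.1 r.1) (qsh p.2 r.2)) := by
  rw [← qmulT_apply, ← gamL_qsh, gamL, linearCombination_apply]
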